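/- arXiv:1404.7221 — 2 statements merged into one kernel-verified Lean document; each statement's English description precedes it below -/
import Mathlib

section
/- Define ρ(s) = 1/η(s) - 1 with η the Dirichlet eta function, and for n ≥ 1 let ζ^l(2n+1) and ζ^r(2n+1) be the real numbers defined by requiring ρ associated to them (via ζ(s) = 1/((1-2^{1-s})(1+ρ(s)))) to equal ρ(2n)/2 and 2ρ(2n+2) respectively. Then ζ^l(2n+1) > ζ^r(2n+1) > 1 for every integer n ≥ 1. -/
/-- The Dirichlet eta function of a real argument s, as an alternating series. -/
noncomputable def realEta (s : ℝ) : ℝ := ∑' n : ℕ, (-1)^n / (n+1 : ℝ)^s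

/-- ρ(s) = 1/η(s) - 1. -/
noncomputable def rho (s : ℝ) : ℝ := 1 / realEta s - 1

/-- The left approximation ζ^l(2n+1) obtained from ρ(2n)/2. -/
noncomputable def zetaL (n : ℕ) : ℝ :=
  1 / ((1 - 2^(-(2*n : ℝ))) * (1 + rho (2*n) / 2))

/-- The right approximation ζ^r(2n+1) obtained from 2ρ(2n+2). -/
noncomputable def zetaR (n : ℕ) : ℝ :=
  1 / ((1 - 2^(-(2*n : ℝ))) * (1 + 2 * rho (2*n+2)))

open Filter Finset Real Topology

/-!
Both approximations have the shape `1 / ((1 - 2^{-2n}) (1 + r))`, which decreases in `r`, so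
`ζ^l(2n+1) > ζ^r(2n+1)` amounts to `ρ(2n) < 4 ρ(2n+2)`, while `ζ^r(2n+1) > 1` follows from
`η(2n+2) ≥ 1 - 2^{-2n-2}`. With `a = 1 - η(s)` and `b = 1 - η(s+2)`, the inequality
`ρ(s) < 4 ρ(s+2)` reads `a + 3ab < 4b`. For `s ≥ 4` the first terms of the alternating series
bound `a` and `b` closely enough, the margin coming down to `63 · 3^s < 20 · 4^s`; for `s = 2`
the series converges too slowly, and the exact values `η(2) = π²/12`, `η(4) = 7π⁴/720` are used.
-/

section Eta

variable {s : ℝ}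

lemma realEta_eq_tsum (s : ℝ) :
    realEta s = ∑' i : ℕ, (-1) ^ i * (1 / ((i : ℝ) + 1) ^ s) := by
  simp only [realEta, mul_one_div]

lemma antitone_one_div_nat_add_one_rpow (hs : 0 ≤ s) :
    Antitone fun i : ℕ => 1 / ((i : ℝ) + 1) ^ s := fun i j hij =>
  one_div_le_one_div_of_le (by positivity)
    (rpow_le_rpow (by positivity) (by gcongr) hs)

lemma summable_one_div_nat_add_one_rpow (hs : 1 < s) :
    Summable fun i : ℕ => 1 / ((i : ℝ) + 1) ^ s := by
  simpa using (summable_nat_add_iff 1).mpr (summable_one_div_nat_rpow.mpr hs)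

lemma tendsto_sum_range_realEta (hs : 1 < s) :
    Tendsto (fun N => ∑ i ∈ range N, (-1) ^ i * (1 / ((i : ℝ) + 1) ^ s)) atTop
      (𝓝 (realEta s)) := by
  rw [realEta_eq_tsum]
  exact (summable_one_div_nat_add_one_rpow hs).alternating.hasSum.tendsto_sum_nat

lemma sum_range_even_le_realEta (hs : 1 < s) (k : ℕ) :
    ∑ i ∈ range (2 * k), (-1) ^ i * (1 / ((i : ℝ) + 1) ^ s) ≤ realEta s :=
  (antitone_one_div_nat_add_one_rpow (by linarith)).alternating_series_le_tendsto
    (tendsto_sum_range_realEta hs) k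

lemma realEta_le_sum_range_odd (hs : 1 < s) (k : ℕ) :
    realEta s ≤ ∑ i ∈ range (2 * k + 1), (-1) ^ i * (1 / ((i : ℝ) + 1) ^ s) :=
  (antitone_one_div_nat_add_one_rpow (by linarith)).tendsto_le_alternating_series
    (tendsto_sum_range_realEta hs) k

lemma realEta_le_one (hs : 1 < s) : realEta s ≤ 1 := by
  simpa using realEta_le_sum_range_odd hs 0

lemma one_sub_two_rpow_neg_le_realEta (hs : 1 < s) : 1 - 2 ^ (-s) ≤ realEta s := by
  have h := sum_range_even_le_realEta hs 1
  norm_num [sum_range_succ] at h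
  rw [rpow_neg zero_le_two]
  linarith

lemma realEta_le_one_sub_two_rpow_neg_add (hs : 1 < s) :
    realEta s ≤ 1 - 2 ^ (-s) + 3 ^ (-s) := by
  have h := realEta_le_sum_range_odd hs 1
  norm_num [sum_range_succ] at h
  rw [rpow_neg zero_le_two, rpow_neg zero_le_three]
  linarith

lemma one_sub_two_rpow_neg_add_sub_le_realEta (hs : 1 < s) :
    1 - 2 ^ (-s) + 3 ^ (-s) - 4 ^ (-s) ≤ realEta s := by
  have h := sum_range_even_le_realEta hs 2
  norm_num [sum_range_succ] at h
  rw [rpow_neg zero_le_two, rpow_neg zero_le_three, rpow_neg zero_le_four]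
  linarith

lemma two_rpow_neg_lt_one (hs : 0 < s) : (2 : ℝ) ^ (-s) < 1 :=
  rpow_lt_one_of_one_lt_of_neg one_lt_two (by linarith)

lemma realEta_pos (hs : 1 < s) : 0 < realEta s := by
  linarith [one_sub_two_rpow_neg_le_realEta hs, two_rpow_neg_lt_one (s := s) (by linarith)]

lemma realEta_eq_of_hasSum (hs : s ≠ 0) {Z : ℝ}
    (h : HasSum (fun n : ℕ => 1 / (n : ℝ) ^ s) Z) : realEta s = (1 - 2 * 2 ^ (-s)) * Z := by
  set f : ℕ → ℝ := fun i => 1 / ((i : ℝ) + 1) ^ s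
  have hf : HasSum f Z := by
    simpa [f, zero_rpow hs] using (hasSum_nat_add_iff' 1).mpr h
  have hodd : HasSum (fun k => f (2 * k + 1)) (2 ^ (-s) * Z) := by
    refine (hf.mul_left (2 ^ (-s))).congr_fun fun k => ?_
    simp only [f]
    push_cast
    rw [show (2 * (k : ℝ) + 1 + 1) = 2 * ((k : ℝ) + 1) by ring,
      mul_rpow zero_le_two (by positivity), rpow_neg zero_le_two]
    field_simp
  obtain ⟨E, heven⟩ : Summable fun k => f (2 * k) :=
    hf.summable.comp_injective (mul_right_injective₀ two_ne_zero)
  have hE : E = Z - 2 ^ (-s) * Z := by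
    linarith [(heven.even_add_odd hodd).unique hf]
  have heta : HasSum (fun i => (-1) ^ i * f i) (E + -(2 ^ (-s) * Z)) :=
    HasSum.even_add_odd (by simpa [pow_mul] using heven)
      (by simpa [pow_succ, pow_mul] using hodd.neg)
  rw [realEta_eq_tsum, heta.tsum_eq, hE]
  ring

end Eta

lemma realEta_two : realEta 2 = π ^ 2 / 12 := by
  rw [realEta_eq_of_hasSum two_ne_zero (by simpa only [rpow_two] using hasSum_zeta_two)]
  norm_num [rpow_neg]
  ring

lemma realEta_four : realEta 4 = 7 * π ^ 4 / 720 := by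
  have h : HasSum (fun n : ℕ => 1 / (n : ℝ) ^ (4 : ℝ)) (π ^ 4 / 90) := by
    simpa only [← rpow_natCast, Nat.cast_ofNat] using hasSum_zeta_four
  rw [realEta_eq_of_hasSum four_ne_zero h]
  norm_num [rpow_neg]
  ring

lemma rho_nonneg {s : ℝ} (hs : 1 < s) : 0 ≤ rho s := by
  rw [rho, sub_nonneg]
  exact one_le_one_div (realEta_pos hs) (realEta_le_one hs)

lemma one_div_sub_one_lt_four_mul {x y : ℝ} (hx : 0 < x) (hy : 0 < y)
    (h : (1 - x) + 3 * ((1 - x) * (1 - y)) < 4 * (1 - y)) :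
    1 / x - 1 < 4 * (1 / y - 1) := by
  rw [div_sub_one hx.ne', div_sub_one hy.ne', mul_div_assoc', div_lt_div_iff₀ hx hy]
  linarith

lemma rho_two_lt_four_mul_rho_four : rho 2 < 4 * rho 4 := by
  refine one_div_sub_one_lt_four_mul (realEta_pos one_lt_two) (realEta_pos (by norm_num)) ?_
  rw [realEta_two, realEta_four]
  have hpl : (3.141592 : ℝ) < π := pi_gt_d6
  have hpu : π < (3.141593 : ℝ) := pi_lt_d6
  have hu1 : (9.86960 : ℝ) < π ^ 2 := by nlinarith
  have hu2 : π ^ 2 < (9.86961 : ℝ) := by nlinarith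
  nlinarith [sq_nonneg (π ^ 2 - 9.8696)]

lemma sixty_three_mul_four_rpow_neg_lt {s : ℝ} (hs : 4 ≤ s) :
    63 * (4 : ℝ) ^ (-s) < 20 * 3 ^ (-s) := by
  have hpow : (256 / 81 : ℝ) ≤ (4 / 3) ^ s :=
    calc (256 / 81 : ℝ) = (4 / 3) ^ (4 : ℝ) := by norm_num
      _ ≤ (4 / 3) ^ s := rpow_le_rpow_of_exponent_le (by norm_num) hs
  have hsplit : (4 : ℝ) ^ s = (4 / 3) ^ s * 3 ^ s := by
    rw [div_rpow (by norm_num) (by norm_num), div_mul_cancel₀ _ (by positivity)]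
  rw [rpow_neg zero_le_four, rpow_neg zero_le_three, hsplit, mul_inv]
  have h3 : 0 < ((3 : ℝ) ^ s)⁻¹ := by positivity
  have hinv : ((4 / 3 : ℝ) ^ s)⁻¹ ≤ 81 / 256 := by
    rw [inv_le_comm₀ (by positivity) (by norm_num)]
    norm_num
    linarith
  nlinarith

lemma rpow_neg_add_two {b : ℝ} (hb : 0 < b) (s : ℝ) : b ^ (-(s + 2)) = b ^ (-s) / b ^ 2 := by
  rw [neg_add, rpow_add hb, rpow_neg hb.le 2, rpow_two, div_eq_mul_inv]

lemma rho_lt_four_mul_rho_add_two {s : ℝ} (hs : 4 ≤ s) : rho s < 4 * rho (s + 2) := by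
  have hs1 : 1 < s := by linarith
  have hs2 : 1 < s + 2 := by linarith
  refine one_div_sub_one_lt_four_mul (realEta_pos hs1) (realEta_pos hs2) ?_
  set u : ℝ := 2 ^ (-s)
  set v : ℝ := 3 ^ (-s)
  have hw : (4 : ℝ) ^ (-s) = u ^ 2 := by
    rw [show (4 : ℝ) = 2 * 2 by norm_num, mul_rpow zero_le_two zero_le_two, sq]
  have huv : 63 * u ^ 2 < 20 * v := hw ▸ sixty_three_mul_four_rpow_neg_lt hs
  have hu : 0 ≤ u := by positivity
  have hx₁ : 1 - realEta s ≤ u - v + u ^ 2 := by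
    linarith [one_sub_two_rpow_neg_add_sub_le_realEta hs1]
  have hx₀ : 0 ≤ 1 - realEta s := by linarith [realEta_le_one hs1]
  have hy₁ : u / 4 - v / 9 ≤ 1 - realEta (s + 2) := by
    have h := realEta_le_one_sub_two_rpow_neg_add hs2
    rw [rpow_neg_add_two two_pos, rpow_neg_add_two three_pos] at h
    norm_num at h
    linarith
  have hy₂ : 1 - realEta (s + 2) ≤ u / 4 := by
    have h := one_sub_two_rpow_neg_le_realEta hs2
    rw [rpow_neg_add_two two_pos] at h
    norm_num at h
    linarith
  have hprod : (1 - realEta s) * (1 - realEta (s + 2)) ≤ u * (u / 4) :=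
    mul_le_mul (by nlinarith) hy₂ (by linarith) hu
  nlinarith

lemma one_sub_two_rpow_neg_mul_one_add_two_mul_rho_lt_one {s : ℝ} (hs : 0 < s) :
    (1 - 2 ^ (-s)) * (1 + 2 * rho (s + 2)) < 1 := by
  have hs2 : 1 < s + 2 := by linarith
  set q : ℝ := 2 ^ (-s)
  set y := realEta (s + 2)
  have hq₀ : 0 < q := by positivity
  have hq₁ : q < 1 := two_rpow_neg_lt_one hs
  have hy₀ : 0 < y := realEta_pos hs2
  have hy : 1 - q / 4 ≤ y := by
    have h := one_sub_two_rpow_neg_le_realEta hs2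
    rw [rpow_neg_add_two two_pos] at h
    norm_num at h
    linarith
  have hrho : 1 + 2 * rho (s + 2) = (2 - y) / y := by
    change 1 + 2 * (1 / y - 1) = _
    field_simp
    ring
  rw [hrho, mul_div_assoc', div_lt_one hy₀]
  nlinarith

theorem stmt18 (n : ℕ) (hn : 1 ≤ n) : zetaL n > zetaR n ∧ zetaR n > 1 := by
  have hs : (2 : ℝ) ≤ 2 * n := by
    have : (1 : ℝ) ≤ n := by exact_mod_cast hn
    linarith
  have hc : 0 < 1 - (2 : ℝ) ^ (-(2 * n : ℝ)) := sub_pos.2 (two_rpow_neg_lt_one (by linarith))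
  have hrho : rho (2 * n) < 4 * rho (2 * n + 2) := by
    rcases hn.eq_or_lt with rfl | hn₂
    · norm_num
      exact rho_two_lt_four_mul_rho_four
    · exact rho_lt_four_mul_rho_add_two (by exact_mod_cast (by omega : 4 ≤ 2 * n))
  have hR := one_sub_two_rpow_neg_mul_one_add_two_mul_rho_lt_one (s := 2 * n) (by linarith)
  have hρ := rho_nonneg (s := 2 * n) (by linarith)
  refine ⟨one_div_lt_one_div_of_lt (mul_pos hc (by linarith)) ?_,
    one_lt_one_div (mul_pos hc (by linarith)) hR⟩
  exact mul_lt_mul_of_pos_left (by linarith) hc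
end

section
/- The quantity ( (2n+1)!/π^{2n+1} · 1/B⁻ₙ − (2n)!/π^{2n} · 1/B⁺ₙ ) / 2^{2n-1} converges to 1 as n → ∞, where B⁺ₙ = (-1)^{n+1} B_{2n} and B⁻ₙ = (-1)^{n+1} ∫₀¹ B_{2n+1}(x) cot(πx) dx. -/
/-- Evaluation of the k-th Bernoulli polynomial at a real number. -/
noncomputable def bernoulliPolyEval (k : ℕ) (t : ℝ) : ℝ :=
  Polynomial.aeval t (Polynomial.bernoulli k)

/-- B⁺ₙ = (-1)^{n+1} B_{2n}. -/
noncomputable def Bplus (n : ℕ) : ℝ := (-1)^(n+1) * (bernoulli (2*n) : ℝ)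

/-- B⁻ₙ = (-1)^{n+1} ∫₀¹ B_{2n+1}(x) cot(πx) dx. -/
noncomputable def Bminus (n : ℕ) : ℝ :=
  (-1)^(n+1) * ∫ x in (0:ℝ)..1, bernoulliPolyEval (2*n+1) x * Real.cot (Real.pi * x)

/-
Both reduced Bernoulli numbers are zeta values in disguise. Euler's formula gives
B⁺ₙ = (2n)! ζ(2n) / (2^{2n-1} π^{2n}). For B⁻ₙ, insert the Fourier series
B_{2n+1}(x) = C ∑ₘ sin(2πmx) / m^{2n+1} and integrate term by term (dominated convergence, since
|sin(2mθ) cot θ| ≤ 2m): on (0,1) one has sin(2πmx) cot(πx) = ∑_{j<m} (cos 2jπx + cos (2j+2)πx),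
whose integral is 1, so B⁻ₙ = 2 (2n+1)! ζ(2n+1) / (2π)^{2n+1}. The quantity in question is therefore
2/ζ(2n+1) − 1/ζ(2n), and ζ(p) → 1 as p → ∞ by dominated convergence against 1/m².
-/

open Real Filter Topology MeasureTheory
open scoped Nat

@[fun_prop]
theorem measurable_cot : Measurable cot := by
  rw [show cot = fun x => cos x / sin x from funext cot_eq_cos_div_sin]
  fun_prop

theorem sin_two_mul_nat_mul_mul_cot_eq_sum {θ : ℝ} (hθ : sin θ ≠ 0) (m : ℕ) :
    sin (2 * m * θ) * cot θ = ∑ j ∈ Finset.range m, (cos (2 * j * θ) + cos ((2 * j + 2) * θ)) := by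
  induction m with
  | zero => simp
  | succ m ih =>
    rw [Finset.sum_range_succ, ← ih, cot_eq_cos_div_sin]
    push_cast
    have e1 : 2 * ((m : ℝ) + 1) * θ = 2 * m * θ + 2 * θ := by ring
    have e2 : (2 * (m : ℝ) + 2) * θ = 2 * m * θ + 2 * θ := by ring
    rw [e1, e2, sin_add, cos_add, sin_two_mul, cos_two_mul]
    field_simp
    linear_combination (2 * cos θ * sin (2 * m * θ)) * sin_sq_add_cos_sq θ

theorem abs_sin_two_mul_nat_mul_mul_cot_le (m : ℕ) (θ : ℝ) :
    |sin (2 * m * θ) * cot θ| ≤ 2 * m := by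
  by_cases hθ : sin θ = 0
  · simp [cot_eq_cos_div_sin, hθ]
  rw [sin_two_mul_nat_mul_mul_cot_eq_sum hθ]
  calc _ ≤ ∑ j ∈ Finset.range m, |cos (2 * j * θ) + cos ((2 * j + 2) * θ)| :=
        Finset.abs_sum_le_sum_abs _ _
    _ ≤ ∑ _j ∈ Finset.range m, (2 : ℝ) := by
        gcongr with j
        exact (abs_add_le _ _).trans
          (by linarith [abs_cos_le_one (2 * j * θ), abs_cos_le_one ((2 * j + 2) * θ)])
    _ = 2 * m := by simp [mul_comm]

theorem integral_cos_nat_mul_pi_mul (k : ℕ) :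
    ∫ x in (0 : ℝ)..1, cos (k * π * x) = if k = 0 then 1 else 0 := by
  rcases eq_or_ne k 0 with rfl | hk
  · simp
  have hkπ : (k : ℝ) * π ≠ 0 := by positivity
  rw [intervalIntegral.integral_comp_mul_left cos hkπ, integral_cos, if_neg hk]
  simp [sin_nat_mul_pi]

theorem integral_sin_two_pi_nat_mul_mul_cot {m : ℕ} (hm : m ≠ 0) :
    ∫ x in (0 : ℝ)..1, sin (2 * π * m * x) * cot (π * x) = 1 := by
  have hcos_sum : ∀ᵐ x, x ∈ Set.uIoc (0 : ℝ) 1 → sin (2 * π * m * x) * cot (π * x) =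
      ∑ j ∈ Finset.range m, (cos ((2 * j : ℕ) * π * x) + cos ((2 * j + 2 : ℕ) * π * x)) := by
    -- `cot π = 0` (division by `sin π = 0`), so the identity fails at `x = 1`.
    filter_upwards [Measure.ae_ne volume 1] with x hx1 hx
    rw [Set.uIoc_of_le zero_le_one] at hx
    have hsin : sin (π * x) ≠ 0 := (sin_pos_of_pos_of_lt_pi (by nlinarith [hx.1, pi_pos])
      (by nlinarith [lt_of_le_of_ne hx.2 hx1, pi_pos])).ne'
    convert sin_two_mul_nat_mul_mul_cot_eq_sum hsin m using 3 <;> push_cast <;> ring_nf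
  have hint : ∀ k : ℕ, IntervalIntegrable (fun x => cos (k * π * x)) volume 0 1 :=
    fun k => Continuous.intervalIntegrable (by fun_prop) _ _
  rw [intervalIntegral.integral_congr_ae hcos_sum, intervalIntegral.integral_finsetSum
    fun j _ => (hint _).add (hint _)]
  simp_rw [intervalIntegral.integral_add (hint _) (hint _), integral_cos_nat_mul_pi_mul]
  simp [Finset.sum_ite_eq', Nat.pos_of_ne_zero hm]

theorem norm_one_div_nat_pow_mul_sin_mul_cot_le (p m : ℕ) (x : ℝ) :
    ‖1 / (m : ℝ) ^ (p + 1) * (sin (2 * π * m * x) * cot (π * x))‖ ≤ 2 / (m : ℝ) ^ p := by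
  rcases eq_or_ne m 0 with rfl | hm
  · simp [div_nonneg]
  have hsc := abs_sin_two_mul_nat_mul_mul_cot_le m (π * x)
  rw [show 2 * (m : ℝ) * (π * x) = 2 * π * m * x by ring] at hsc
  calc _ = 1 / (m : ℝ) ^ (p + 1) * |sin (2 * π * m * x) * cot (π * x)| := by
        rw [norm_mul, norm_of_nonneg (by positivity), Real.norm_eq_abs]
    _ ≤ 1 / (m : ℝ) ^ (p + 1) * (2 * m) := by gcongr
    _ = 2 / (m : ℝ) ^ p := by field_simp; ring

theorem tendsto_tsum_one_div_nat_pow_atTop :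
    Tendsto (fun p : ℕ => ∑' m : ℕ, 1 / (m : ℝ) ^ p) atTop (𝓝 1) := by
  have hlim : ∀ m : ℕ,
      Tendsto (fun p : ℕ => 1 / (m : ℝ) ^ p) atTop (𝓝 (if m = 1 then 1 else 0)) := by
    intro m
    rcases lt_trichotomy m 1 with hm | rfl | hm
    · obtain rfl : m = 0 := by omega
      refine tendsto_const_nhds.congr' ?_
      filter_upwards [eventually_ne_atTop 0] with p hp
      simp [hp]
    · simp
    · simp only [one_div, if_neg hm.ne']
      exact tendsto_inv_atTop_zero.comp (tendsto_pow_atTop_atTop_of_one_lt (by exact_mod_cast hm))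
  have hbound : ∀ᶠ p in atTop, ∀ m : ℕ, ‖1 / (m : ℝ) ^ p‖ ≤ 1 / (m : ℝ) ^ 2 := by
    filter_upwards [eventually_ge_atTop 2] with p hp m
    rcases eq_or_ne m 0 with rfl | hm
    · simp [show p ≠ 0 by omega]
    rw [norm_of_nonneg (by positivity)]
    gcongr
    · exact_mod_cast Nat.one_le_iff_ne_zero.mpr hm
  simpa using tendsto_tsum_of_dominated_convergence
    (Real.summable_one_div_nat_pow.mpr one_lt_two) hlim hbound

theorem Bminus_eq_tsum {n : ℕ} (hn : n ≠ 0) :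
    Bminus n = 2 * (2 * n + 1)! / (2 * π) ^ (2 * n + 1) * ∑' m : ℕ, 1 / (m : ℝ) ^ (2 * n + 1) := by
  -- the constant of Mathlib's Fourier expansion `hasSum_one_div_nat_pow_mul_sin` of `B_{2n+1}`
  set C : ℝ := (-1) ^ (n + 1) * (2 * π) ^ (2 * n + 1) / 2 / (2 * n + 1)!
  set F : ℕ → ℝ → ℝ :=
    fun m x => 1 / (m : ℝ) ^ (2 * n + 1) * (sin (2 * π * m * x) * cot (π * x))
  have hF : ∀ m : ℕ, ∫ x in (0 : ℝ)..1, F m x = 1 / (m : ℝ) ^ (2 * n + 1) := by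
    intro m
    rcases eq_or_ne m 0 with rfl | hm
    · simp [F]
    simp only [F, intervalIntegral.integral_const_mul]
    rw [integral_sin_two_pi_nat_mul_mul_cot hm, mul_one]
  have hbound_summable : Summable fun m : ℕ => 2 / (m : ℝ) ^ (2 * n) :=
    (((Real.summable_one_div_nat_pow (p := 2 * n)).mpr (by omega)).mul_left 2).congr
      fun m => by ring
  have hsum : HasSum (fun m => ∫ x in (0 : ℝ)..1, F m x)
      (∫ x in (0 : ℝ)..1, C * (bernoulliPolyEval (2 * n + 1) x * cot (π * x))) := by
    refine intervalIntegral.hasSum_integral_of_dominated_convergence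
      (fun m _ => 2 / (m : ℝ) ^ (2 * n)) (fun m => ?_)
      (fun m => ae_of_all _ fun x _ => norm_one_div_nat_pow_mul_sin_mul_cot_le _ m x)
      (ae_of_all _ fun _ _ => hbound_summable)
      intervalIntegrable_const (ae_of_all _ fun x hx => ?_)
    · exact Measurable.aestronglyMeasurable (by fun_prop)
    · rw [Set.uIoc_of_le zero_le_one] at hx
      have := (hasSum_one_div_nat_pow_mul_sin hn (Set.Ioc_subset_Icc_self hx)).mul_right
        (cot (π * x))
      rw [bernoulliPolyEval, Polynomial.aeval_def, ← Polynomial.eval_map]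
      simpa only [F, ← mul_assoc] using this
  simp_rw [hF, intervalIntegral.integral_const_mul] at hsum
  rw [Bminus, hsum.tsum_eq]
  simp only [C]
  field_simp

theorem Bplus_eq_tsum {n : ℕ} (hn : n ≠ 0) :
    Bplus n = (2 * n)! / (2 ^ (2 * n - 1) * π ^ (2 * n)) * ∑' m : ℕ, 1 / (m : ℝ) ^ (2 * n) := by
  rw [Bplus, (hasSum_zeta_nat hn).tsum_eq]
  field_simp

theorem tsum_one_div_nat_pow_pos {p : ℕ} (hp : 1 < p) : 0 < ∑' m : ℕ, 1 / (m : ℝ) ^ p :=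
  (Real.summable_one_div_nat_pow.mpr hp).tsum_pos (fun _ => by positivity) 1 (by norm_num)

theorem factorial_div_pi_pow_div_Bminus_sub_eq {n : ℕ} (hn : n ≠ 0) :
    ((2 * n + 1)! / π ^ (2 * n + 1) * (1 / Bminus n) - (2 * n)! / π ^ (2 * n) * (1 / Bplus n))
        / 2 ^ (2 * n - 1)
      = 2 / ∑' m : ℕ, 1 / (m : ℝ) ^ (2 * n + 1) - 1 / ∑' m : ℕ, 1 / (m : ℝ) ^ (2 * n) := by
  have hZ := tsum_one_div_nat_pow_pos (p := 2 * n + 1) (by omega)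
  have hW := tsum_one_div_nat_pow_pos (p := 2 * n) (by omega)
  have h2 : (2 : ℝ) ^ (2 * n + 1) = 2 ^ (2 * n - 1) * 4 := by
    rw [show 2 * n + 1 = 2 * n - 1 + 2 by omega, pow_add]; norm_num
  rw [Bminus_eq_tsum hn, Bplus_eq_tsum hn, mul_pow, h2]
  field_simp
  ring

theorem stmt19 :
    Filter.Tendsto
      (fun n : ℕ =>
        ((Nat.factorial (2*n+1) : ℝ) / Real.pi^(2*n+1) * (1 / Bminus n)
          - (Nat.factorial (2*n) : ℝ) / Real.pi^(2*n) * (1 / Bplus n)) / 2^(2*n-1))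
      Filter.atTop (nhds 1) := by
  have h2n : Tendsto (fun n : ℕ => 2 * n) atTop atTop := tendsto_id.const_mul_atTop' two_pos
  have hodd := tendsto_tsum_one_div_nat_pow_atTop.comp ((tendsto_add_atTop_nat 1).comp h2n)
  have heven := tendsto_tsum_one_div_nat_pow_atTop.comp h2n
  have hlim := (tendsto_const_nhds (x := (2 : ℝ))).div hodd one_ne_zero |>.sub
    ((tendsto_const_nhds (x := (1 : ℝ))).div heven one_ne_zero)
  rw [show (2 : ℝ) / 1 - 1 / 1 = 1 by norm_num] at hlim
  refine hlim.congr' ?_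
  filter_upwards [eventually_ne_atTop 0] with n hn
  exact (factorial_div_pi_pow_div_Bminus_sub_eq hn).symm
end
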